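/- arXiv:math/0412289 — 2 statements merged into one kernel-verified Lean document; each statement's English description precedes it below -/
import Mathlib

section
/- Let μ/α and ν/β be skew shapes (α ⊆ μ, β ⊆ ν) that are both vertical strips, and let (μ/α, ν/β)~ = (λ/σ, ρ/τ). Then λ/σ and ρ/τ are both vertical strips. -/
open scoped BigOperators

/-- `conj f j` is the number of indices `i` with `f i > j`, i.e. the length of the
`(j+1)`-st column of the Young diagram of `f` (0-indexed conjugate partition). -/
noncomputable def conj (f : ℕ → ℕ) (j : ℕ) : ℕ := Nat.card {i : ℕ | j < f i}

/-- `f` is a partition: weakly decreasing with finitely many nonzero parts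
(0-indexed: the `(i+1)`-st part is `f i`). -/
def IsPartition (f : ℕ → ℕ) : Prop := Antitone f ∧ ∃ N, ∀ i, N ≤ i → f i = 0

/-- the number of nonzero parts of `f` -/
noncomputable def len (f : ℕ → ℕ) : ℕ := Nat.card {i : ℕ | f i ≠ 0}

/-- the sum of the parts, `|f|` -/
noncomputable def wt (f : ℕ → ℕ) : ℕ := ∑ᶠ i, f i

/-- `R` is the weakly decreasing rearrangement of the (multiset of nonzero) values of `f`:
`R` is a partition and, for every threshold `t`, `R` has as many parts `> t` as `f` does. -/
def IsSortOf (R f : ℕ → ℕ) : Prop := IsPartition R ∧ ∀ t, conj R t = conj f t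

/-- `γ = μ ∪ ν` : `γ` is the decreasing rearrangement of all the parts of `μ` and `ν`
together: for every threshold `t`, the number of parts of `γ` that are `> t` equals the
number of such parts of `μ` plus the number of such parts of `ν`. -/
def IsUnion (γ μ ν : ℕ → ℕ) : Prop := IsPartition γ ∧ ∀ t, conj γ t = conj μ t + conj ν t

/-- `(l, r) = (μ, ν)~` : with `γ₁ ≥ γ₂ ≥ ⋯` the decreasing rearrangement of all the parts
of `μ` and `ν`, `l = (γ₁, γ₃, γ₅, …)` and `r = (γ₂, γ₄, γ₆, …)` (0-indexed below). -/
def IsTilde (μ ν l r : ℕ → ℕ) : Prop :=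
  ∃ γ : ℕ → ℕ, IsUnion γ μ ν ∧ (∀ i, l i = γ (2 * i)) ∧ (∀ i, r i = γ (2 * i + 1))

/-- dominance order `θ ⪰ π`: every initial partial sum of `θ` is at least that of `π`. -/
def Dominates (θ π : ℕ → ℕ) : Prop :=
  ∀ k, ∑ i ∈ Finset.range k, π i ≤ ∑ i ∈ Finset.range k, θ i

/-- the complete homogeneous symmetric polynomial `h_k` in `n` variables,
with the convention `h_k = 0` for `k < 0`. -/
noncomputable def hpoly (n : ℕ) (k : ℤ) : MvPolynomial (Fin n) ℤ :=
  if 0 ≤ k then MvPolynomial.hsymm (Fin n) ℤ k.toNat else 0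

/-- the skew Schur polynomial `s_{μ/α}` in `n` variables, defined by the
Jacobi–Trudi determinant `det (h_{μ_i - α_j - i + j})`. -/
noncomputable def skewSchur (n : ℕ) (μ α : ℕ → ℕ) : MvPolynomial (Fin n) ℤ :=
  Matrix.det (Matrix.of fun i j : Fin (len μ) =>
    hpoly n ((μ (i : ℕ) : ℤ) - (α (j : ℕ) : ℤ) - ((i : ℕ) : ℤ) + ((j : ℕ) : ℤ)))

/-- the Schur polynomial `s_μ` in `n` variables. -/
noncomputable def schur (n : ℕ) (μ : ℕ → ℕ) : MvPolynomial (Fin n) ℤ :=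
  skewSchur n μ (fun _ => 0)

/-- A symmetric function, given as the compatible family of its truncations to `n`
variables for every `n`, is Schur-positive if it is a linear combination of Schur
functions with nonnegative integer coefficients. -/
def SchurPositive (F : ∀ n : ℕ, MvPolynomial (Fin n) ℤ) : Prop :=
  ∃ c : (ℕ → ℕ) → ℕ, (Function.support c).Finite ∧
    (∀ θ, c θ ≠ 0 → IsPartition θ) ∧
    ∀ n, F n = ∑ᶠ θ : ℕ → ℕ, (c θ : ℤ) • schur n θ

/-- `c` is the family of coefficients in the Schur expansion of `s_μ s_ν`,
i.e. the Littlewood–Richardson coefficients `c θ = c^θ_{μν}`. -/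
def IsSchurExpansionOfProduct (μ ν : ℕ → ℕ) (c : (ℕ → ℕ) → ℤ) : Prop :=
  (Function.support c).Finite ∧ (∀ θ, c θ ≠ 0 → IsPartition θ) ∧
    ∀ n, schur n μ * schur n ν = ∑ᶠ θ : ℕ → ℕ, c θ • schur n θ

/-- `c` is the family of coefficients in the Schur expansion of `s_{μ/α} s_{ν/β}`. -/
def IsSchurExpansionOfSkewProduct (μ α ν β : ℕ → ℕ) (c : (ℕ → ℕ) → ℤ) : Prop :=
  (Function.support c).Finite ∧ (∀ θ, c θ ≠ 0 → IsPartition θ) ∧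
    ∀ n, skewSchur n μ α * skewSchur n ν β = ∑ᶠ θ : ℕ → ℕ, c θ • schur n θ

/-- a hook partition `(j, 1^k)`, `j ≥ 1`: nonempty, and all parts after the first are ≤ 1. -/
def IsHook (f : ℕ → ℕ) : Prop := IsPartition f ∧ 1 ≤ f 0 ∧ ∀ i, 1 ≤ i → f i ≤ 1

lemma conj_eq_ncard (f : ℕ → ℕ) (t : ℕ) : conj f t = {i : ℕ | t < f i}.ncard := by
  rw [conj, Nat.card_coe_set_eq]

lemma conj_finite {f : ℕ → ℕ} (hf : IsPartition f) (t : ℕ) : {i : ℕ | t < f i}.Finite := by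
  obtain ⟨N, hN⟩ := hf.2
  apply Set.Finite.subset (Set.finite_Iio N)
  intro i hi
  simp only [Set.mem_setOf_eq] at hi
  by_contra h
  simp only [Set.mem_Iio, not_lt] at h
  rw [hN i h] at hi; omega

lemma lt_conj_iff {f : ℕ → ℕ} (hf : IsPartition f) (k t : ℕ) :
    k < conj f t ↔ t < f k := by
  rw [conj_eq_ncard]
  constructor
  · intro h
    by_contra hc
    push_neg at hc
    have hsub : {i : ℕ | t < f i} ⊆ Set.Iio k := by
      intro i hi
      simp only [Set.mem_setOf_eq] at hi
      by_contra hik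
      simp only [Set.mem_Iio, not_lt] at hik
      exact absurd hi (not_lt.2 (le_trans (hf.1 hik) hc))
    have := Set.ncard_le_ncard hsub (Set.finite_Iio k)
    rw [show Set.Iio k = ↑(Finset.range k) by simp [Finset.coe_range],
      Set.ncard_coe_finset, Finset.card_range] at this
    omega
  · intro h
    have hsub : Set.Iio (k + 1) ⊆ {i : ℕ | t < f i} := by
      intro i hi
      simp only [Set.mem_Iio] at hi
      exact lt_of_lt_of_le h (hf.1 (Nat.lt_succ_iff.mp hi))
    have := Set.ncard_le_ncard hsub (conj_finite hf t)
    rw [show Set.Iio (k + 1) = ↑(Finset.range (k + 1)) by simp [Finset.coe_range],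
      Set.ncard_coe_finset, Finset.card_range] at this
    omega

lemma conj_le_conj {f g : ℕ → ℕ} (hg : IsPartition g) {s t : ℕ}
    (h : ∀ i, s < f i → t < g i) : conj f s ≤ conj g t := by
  rw [conj_eq_ncard, conj_eq_ncard]
  exact Set.ncard_le_ncard (fun i hi => h i hi) (conj_finite hg t)

/-- Proposition 12(ii): the tilde operation preserves pairs of vertical
strips: a skew shape `μ/α` is a vertical strip iff `μᵢ - αᵢ ≤ 1` for all `i`. -/
theorem stmt7 (μ α ν β l σ ρ τ : ℕ → ℕ)
    (hμ : IsPartition μ) (hα : IsPartition α) (hν : IsPartition ν) (hβ : IsPartition β)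
    (hαμ : ∀ i, α i ≤ μ i) (hβν : ∀ i, β i ≤ ν i)
    (hvs1 : ∀ i, μ i ≤ α i + 1)
    (hvs2 : ∀ i, ν i ≤ β i + 1)
    (ht1 : IsTilde μ ν l ρ) (ht2 : IsTilde α β σ τ) :
    (∀ i, l i ≤ σ i + 1) ∧ (∀ i, ρ i ≤ τ i + 1) := by
  obtain ⟨γ, ⟨hγp, hγc⟩, hl, hρ⟩ := ht1
  obtain ⟨δ, ⟨hδp, hδc⟩, hσ, hτ⟩ := ht2
  have key : ∀ k, γ k ≤ δ k + 1 := by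
    intro k
    by_contra hc
    push_neg at hc
    set t := δ k + 1 with ht
    have h1 : k < conj γ t := (lt_conj_iff hγp k t).2 (by omega)
    have h2 : conj μ t ≤ conj α (δ k) :=
      conj_le_conj hα (fun i hi => by have := hvs1 i; omega)
    have h3 : conj ν t ≤ conj β (δ k) :=
      conj_le_conj hβ (fun i hi => by have := hvs2 i; omega)
    have h4 : ¬ (k < conj δ (δ k)) := by
      rw [lt_conj_iff hδp]; omega
    rw [hγc] at h1
    rw [hδc] at h4
    omega
  constructor
  · intro i; rw [hl, hσ]; exact key (2 * i)
  · intro i; rw [hρ, hτ]; exact key (2 * i + 1)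
end

section
/- Let μ and ν be partitions with |μ| = |ν| and μ ⪰ ν in dominance order, and let d be a nonnegative integer. Then the partition obtained by inserting a part equal to d into μ (and re-sorting into weakly decreasing order) dominates the partition obtained by inserting a part equal to d into ν. -/
open scoped BigOperators

lemma lt_iff_lt_conj (f : ℕ → ℕ) (hf : IsPartition f) (t i : ℕ) :
    t < f i ↔ i < conj f t := by
  obtain ⟨hanti, N, hN⟩ := hf
  have hfin : {i : ℕ | t < f i}.Finite := by
    apply Set.Finite.subset (Set.finite_Iio N)
    intro j hj
    simp only [Set.mem_setOf_eq] at hj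
    simp only [Set.mem_Iio]
    by_contra h
    push_neg at h
    rw [hN j h] at hj; omega
  have hcard : conj f t = hfin.toFinset.card := by
    rw [conj, Nat.card_eq_card_finite_toFinset]
  constructor
  · intro h
    have hsub : Finset.range (i + 1) ⊆ hfin.toFinset := by
      intro j hj
      simp only [Finset.mem_range] at hj
      simp only [Set.Finite.mem_toFinset, Set.mem_setOf_eq]
      exact lt_of_lt_of_le h (hanti (by omega))
    have := Finset.card_le_card hsub
    simp only [Finset.card_range] at this
    omega
  · intro h
    by_contra hc
    push_neg at hc
    have hsub : hfin.toFinset ⊆ Finset.range i := by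
      intro j hj
      simp only [Set.Finite.mem_toFinset, Set.mem_setOf_eq] at hj
      simp only [Finset.mem_range]
      by_contra h2
      push_neg at h2
      have : f j ≤ f i := hanti h2
      omega
    have := Finset.card_le_card hsub
    simp only [Finset.card_range] at this
    omega

lemma part_eq_of_conj_eq (R R' : ℕ → ℕ) (hR : IsPartition R) (hR' : IsPartition R')
    (h : ∀ t, conj R t = conj R' t) (i : ℕ) : R i = R' i := by
  by_contra hne
  rcases Nat.lt_or_ge (R i) (R' i) with hlt | hge
  · have h1 := (lt_iff_lt_conj R' hR' (R i) i).mp hlt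
    rw [← h] at h1
    have h2 := (lt_iff_lt_conj R hR (R i) i).mpr h1
    omega
  · have hlt : R' i < R i := by omega
    have h1 := (lt_iff_lt_conj R hR (R' i) i).mp hlt
    rw [h] at h1
    have h2 := (lt_iff_lt_conj R' hR' (R' i) i).mpr h1
    omega

lemma conj_comp_equiv (f : ℕ → ℕ) (σ : ℕ ≃ ℕ) (t : ℕ) :
    conj (f ∘ σ) t = conj f t := by
  unfold conj
  have hset : {i : ℕ | t < (f ∘ σ) i} = σ.symm '' {i : ℕ | t < f i} := by
    ext i
    constructor
    · intro hi
      exact ⟨σ i, hi, σ.symm_apply_apply i⟩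
    · rintro ⟨j, hj, rfl⟩
      simpa [Set.mem_setOf_eq] using hj
  rw [hset, Nat.card_image_of_injective σ.symm.injective]

/-- the insertion of `d` into `μ` at position `p` -/
def insFun (μ : ℕ → ℕ) (d p : ℕ) : ℕ → ℕ :=
  fun i => if i < p then μ i else if i = p then d else μ (i - 1)

lemma insFun_lt {μ d p i} (h : i < p) : insFun μ d p i = μ i := if_pos h

lemma insFun_self {μ d p} : insFun μ d p p = d := by
  unfold insFun
  rw [if_neg (lt_irrefl _), if_pos rfl]

lemma insFun_gt {μ d p i} (h : p < i) : insFun μ d p i = μ (i - 1) := by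
  unfold insFun
  rw [if_neg (by omega), if_neg (by omega)]

/-- the permutation of indices realizing the insertion -/
def insEquiv (p : ℕ) : ℕ ≃ ℕ where
  toFun i := if i < p then i + 1 else if i = p then 0 else i
  invFun j := if j = 0 then p else if j ≤ p then j - 1 else j
  left_inv i := by
    dsimp only
    rcases lt_trichotomy i p with h | h | h
    · have hv : (if i < p then i + 1 else if i = p then 0 else i) = i + 1 := if_pos h
      rw [hv, if_neg (Nat.succ_ne_zero i), if_pos (by omega)]
      omega
    · have hv : (if i < p then i + 1 else if i = p then 0 else i) = 0 := by
        rw [if_neg (by omega), if_pos h]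
      rw [hv, if_pos rfl, h]
    · have hv : (if i < p then i + 1 else if i = p then 0 else i) = i := by
        rw [if_neg (by omega), if_neg (by omega)]
      rw [hv, if_neg (by omega), if_neg (by omega)]
  right_inv j := by
    dsimp only
    rcases Nat.eq_zero_or_pos j with h | h
    · have hv : (if j = 0 then p else if j ≤ p then j - 1 else j) = p := if_pos h
      rw [hv, if_neg (lt_irrefl _), if_pos rfl, h]
    · rcases Nat.lt_or_ge p j with h2 | h2
      · have hv : (if j = 0 then p else if j ≤ p then j - 1 else j) = j := by
          rw [if_neg (by omega), if_neg (by omega)]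
        rw [hv, if_neg (by omega), if_neg (by omega)]
      · have hv : (if j = 0 then p else if j ≤ p then j - 1 else j) = j - 1 := by
          rw [if_neg (by omega), if_pos h2]
        rw [hv, if_pos (by omega)]
        omega

lemma insFun_comp (μ : ℕ → ℕ) (d p : ℕ) :
    insFun μ d p = (fun i => if i = 0 then d else μ (i - 1)) ∘ (insEquiv p) := by
  funext i
  simp only [Function.comp]
  have hσ : (insEquiv p) i = if i < p then i + 1 else if i = p then 0 else i := rfl
  rcases lt_trichotomy i p with h | h | h
  · have hv : (insEquiv p) i = i + 1 := by rw [hσ, if_pos h]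
    rw [insFun_lt h, hv, if_neg (Nat.succ_ne_zero i), Nat.add_sub_cancel]
  · have hv : (insEquiv p) i = 0 := by rw [hσ, if_neg (by omega), if_pos h]
    rw [hv, if_pos rfl, h, insFun_self]
  · have hv : (insEquiv p) i = i := by rw [hσ, if_neg (by omega), if_neg (by omega)]
    rw [insFun_gt h, hv, if_neg (by omega)]

lemma sorted_sum (μ R : ℕ → ℕ) (d : ℕ) (hμ : IsPartition μ)
    (hR : IsSortOf R (fun i => if i = 0 then d else μ (i - 1))) (k : ℕ) :
    ∑ i ∈ Finset.range (k + 1), R i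
      = max (∑ i ∈ Finset.range (k + 1), μ i) (∑ i ∈ Finset.range k, μ i + d) := by
  obtain ⟨p, hpμ⟩ : ∃ p, ∀ i, i < p ↔ d < μ i :=
    ⟨conj μ d, fun i => (lt_iff_lt_conj μ hμ d i).symm⟩
  have hpart : IsPartition (insFun μ d p) := by
    constructor
    · apply antitone_nat_of_succ_le
      intro i
      rcases lt_trichotomy (i + 1) p with h | h | h
      · rw [insFun_lt h, insFun_lt (by omega)]
        exact hμ.1 (by omega)
      · rw [← h, insFun_self, insFun_lt (by omega)]
        have := (hpμ i).mp (by omega)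
        omega
      · rw [insFun_gt h, Nat.add_sub_cancel]
        rcases lt_trichotomy i p with h2 | h2 | h2
        · rw [insFun_lt h2]
        · rw [← h2, insFun_self]
          have : ¬ d < μ i := fun hc => by have := (hpμ i).mpr hc; omega
          omega
        · rw [insFun_gt h2]
          exact hμ.1 (by omega)
    · obtain ⟨N, hN⟩ := hμ.2
      refine ⟨max (p + 1) (N + 1), fun i hi => ?_⟩
      rw [insFun_gt (by omega)]
      exact hN _ (by omega)
  have hconj : ∀ t, conj R t = conj (insFun μ d p) t := by
    intro t
    rw [hR.2 t, insFun_comp μ d p, conj_comp_equiv]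
  have hRe : ∀ i, R i = insFun μ d p i := part_eq_of_conj_eq R _ hR.1 hpart hconj
  have hsum : ∀ m, ∑ i ∈ Finset.range (m + 1), insFun μ d p i
      = if m < p then ∑ i ∈ Finset.range (m + 1), μ i
        else ∑ i ∈ Finset.range m, μ i + d := by
    intro m
    induction m with
    | zero =>
      rw [Finset.sum_range_one]
      by_cases h : 0 < p
      · rw [if_pos h, insFun_lt h, Finset.sum_range_one]
      · have hp0 : p = 0 := by omega
        rw [if_neg h, hp0, insFun_self]
        rw [Finset.range_zero, Finset.sum_empty]
        omega
    | succ m ih =>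
      rw [Finset.sum_range_succ, ih]
      rcases lt_trichotomy (m + 1) p with h | h | h
      · rw [if_pos (by omega), if_pos h, insFun_lt h,
          Finset.sum_range_succ (f := μ) (n := m + 1)]
      · rw [if_pos (by omega), if_neg (by omega), ← h, insFun_self]
      · have hm : ¬ m < p := by omega
        rw [if_neg hm, if_neg (by omega), insFun_gt h, Nat.add_sub_cancel,
          Finset.sum_range_succ]
        omega
  have hsR : ∑ i ∈ Finset.range (k + 1), R i
      = ∑ i ∈ Finset.range (k + 1), insFun μ d p i :=
    Finset.sum_congr rfl fun i _ => hRe i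
  rw [hsR, hsum]
  by_cases h : k < p
  · rw [if_pos h]
    have hd : d < μ k := (hpμ k).mp h
    rw [Finset.sum_range_succ]
    omega
  · rw [if_neg h]
    have hd : ¬ d < μ k := fun hc => h ((hpμ k).mpr hc)
    rw [Finset.sum_range_succ]
    omega

/-- Lemma 16(i): if `μ ⪰ ν` in dominance order (with `|μ| = |ν|`) and
`d ≥ 0`, then the partition obtained by inserting a part `d` into `μ` and re-sorting
dominates the one obtained by inserting a part `d` into `ν`. -/
theorem stmt16 (μ ν μd νd : ℕ → ℕ) (d : ℕ)
    (hμ : IsPartition μ) (hν : IsPartition ν)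
    (hwt : wt μ = wt ν) (hdom : Dominates μ ν)
    (hμd : IsSortOf μd (fun i => if i = 0 then d else μ (i - 1)))
    (hνd : IsSortOf νd (fun i => if i = 0 then d else ν (i - 1))) :
    Dominates μd νd := by
  intro k
  cases k with
  | zero => simp
  | succ k =>
    rw [sorted_sum μ μd d hμ hμd k, sorted_sum ν νd d hν hνd k]
    exact max_le_max (hdom (k + 1)) (Nat.add_le_add_right (hdom k) d)
end
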